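/- arXiv:2405.20317 — 5 statements merged into one kernel-verified Lean document; each statement's English description precedes it below -/
import Mathlib

section
/- Let X be a complex Hilbert space, F : Ω → B(X) satisfy F(z_n)u = c_n ⟨u, u_n⟩ u_n for all u ∈ X and n ∈ ℕ, where {u_n} is an orthonormal basis of X and c_n ≠ 0. Then every f ∈ H_F satisfies the Kramer sampling formula f(z) = Σ_{n=1}^∞ ⟨f(z_n), u_n⟩ · F_n(z)/c_n for all z ∈ Ω, where F_n(z) = F(z)u_n and the series converges in H_F (hence pointwise). -/
open scoped ComplexInnerProductSpace

/-- the Kramer sampling formula f(z) = Σ_n ⟨f(z_n),u_n⟩ F_n(z)/c_n for f = F(·)u: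
the series converges in H_F (i.e. Σ_n (⟨f(z_n),u_n⟩/c_n) u_n = u in X, under the unitary L)
and hence pointwise on Ω. -/
theorem stmt9 {X : Type*} [NormedAddCommGroup X] [InnerProductSpace ℂ X] [CompleteSpace X]
    (Ω : Set ℂ) (e : HilbertBasis ℕ ℂ X) (z : ℕ → ℂ) (hz : ∀ n, z n ∈ Ω)
    (c : ℕ → ℂ) (hc : ∀ n, c n ≠ 0) (F : ℂ → X →L[ℂ] X)
    (hF : ∀ n, ∀ u : X, F (z n) u = (c n * ⟪e n, u⟫) • (e n : X)) :
    ∀ u : X,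
      HasSum (fun n => (⟪(e n : X), F (z n) u⟫ / c n) • (e n : X)) u ∧
      ∀ w ∈ Ω, HasSum (fun n => (⟪(e n : X), F (z n) u⟫ / c n) • F w (e n)) (F w u) := by
  intro u
  have key : ∀ n, ⟪(e n : X), F (z n) u⟫ / c n = ⟪(e n : X), u⟫ := by
    intro n
    rw [hF n u, inner_smul_right, inner_self_eq_norm_sq_to_K, e.orthonormal.1 n]
    push_cast
    rw [one_pow, mul_one]
    exact mul_div_cancel_left₀ _ (hc n)
  have h1 : HasSum (fun n => (⟪(e n : X), F (z n) u⟫ / c n) • (e n : X)) u := by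
    simp only [key]
    simpa [e.repr_apply_apply] using e.hasSum_repr u
  exact ⟨h1, fun w _ => by simpa using (F w).hasSum h1⟩
end

section
/- Let H be a reproducing kernel Hilbert space of X-valued entire functions and β ∈ ℂ with R_β H_β ⊆ H, where H_β = {f ∈ H : f(β)=0} and (R_β f)(z) = f(z)/(z-β). Then for every f in the domain D of the multiplication operator 𝔗, one has R_β(𝔗 - βI)f = f; consequently range(𝔗 - βI) = H_β, R_β H_β = D, and β is a point of regular type for 𝔗 (i.e., there exists C_β > 0 with ‖(𝔗 - βI)f‖ ≥ C_β ‖f‖ for all f ∈ D). -/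
set_option maxHeartbeats 1600000 in
/-- if R_β H_β ⊆ H then (i) R_β(𝔗-βI)f = f for f ∈ D(𝔗), (ii) rng(𝔗-βI) = H_β,
(iii) R_β H_β ⊆ D(𝔗) (indeed R_β H_β = D), and (iv) β is a point of regular type for 𝔗.
Here f ∈ D(𝔗) with 𝔗f = g is encoded by ∀ z, J g z = z • J f z. -/
theorem stmt11 {X H : Type*} [NormedAddCommGroup X] [InnerProductSpace ℂ X]
    [NormedAddCommGroup H] [InnerProductSpace ℂ H] [CompleteSpace H]
    (J : H →ₗ[ℂ] (ℂ → X)) (hJinj : Function.Injective J)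
    (hJdiff : ∀ f : H, Differentiable ℂ (J f))
    (hJeval : ∀ z : ℂ, Continuous fun f : H => J f z)
    (β : ℂ)
    (hinv : ∀ f : H, J f β = 0 → ∃ g : H, ∀ z, (z - β) • J g z = J f z) :
    -- (i) R_β (𝔗 - βI) f = f for every f in the domain of 𝔗
    (∀ f g r : H, (∀ z, J g z = z • J f z) →
      (∀ z, (z - β) • J r z = J g z - β • J f z) → r = f) ∧
    -- (ii) range (𝔗 - βI) = H_β
    (∀ h : H, J h β = 0 ↔ ∃ f : H, (∃ g : H, ∀ z, J g z = z • J f z) ∧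
      ∀ z, J h z = (z - β) • J f z) ∧
    -- (iii) R_β H_β ⊆ D(𝔗)
    (∀ f : H, J f β = 0 → ∀ g : H, (∀ z, (z - β) • J g z = J f z) →
      ∃ g' : H, ∀ z, J g' z = z • J g z) ∧
    -- (iv) β is a point of regular type: ‖(𝔗 - βI)f‖ ≥ C_β ‖f‖ on D(𝔗)
    (∃ C : ℝ, 0 < C ∧ ∀ f g : H, (∀ z, J g z = z • J f z) → C * ‖f‖ ≤ ‖g - β • f‖) := by
  classical
  -- functions equal off β are equal
  have key : ∀ u v : H, (∀ z : ℂ, z ≠ β → J u z = J v z) → u = v := by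
    intro u v h
    apply hJinj
    have hd : Dense ({β}ᶜ : Set ℂ) := dense_compl_singleton β
    exact Continuous.ext_on hd (hJdiff u).continuous (hJdiff v).continuous
      (fun z hz => h z hz)
  -- uniqueness of R_β
  have uniq : ∀ u v h : H, (∀ z, (z - β) • J u z = J h z) →
      (∀ z, (z - β) • J v z = J h z) → u = v := by
    intro u v h hu hv
    apply key
    intro z hz
    have hne : z - β ≠ 0 := sub_ne_zero.mpr hz
    have : (z - β) • J u z = (z - β) • J v z := by rw [hu z, hv z]
    have := congrArg (fun x => (z - β)⁻¹ • x) this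
    simpa [inv_smul_smul₀ hne] using this
  -- part (i)
  have part1 : ∀ f g r : H, (∀ z, J g z = z • J f z) →
      (∀ z, (z - β) • J r z = J g z - β • J f z) → r = f := by
    intro f g r hg hr
    apply key
    intro z hz
    have hne : z - β ≠ 0 := sub_ne_zero.mpr hz
    have h1 : (z - β) • J r z = (z - β) • J f z := by
      rw [hr z, hg z, sub_smul]
    have := congrArg (fun x => (z - β)⁻¹ • x) h1
    simpa [inv_smul_smul₀ hne] using this
  -- part (iii)
  have part3 : ∀ f : H, J f β = 0 → ∀ g : H, (∀ z, (z - β) • J g z = J f z) →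
      ∃ g' : H, ∀ z, J g' z = z • J g z := by
    intro f hf g hg
    refine ⟨f + β • g, fun z => ?_⟩
    have : J (f + β • g) z = J f z + β • J g z := by
      simp [map_add, map_smul]
    rw [this, ← hg z, sub_smul]
    abel
  refine ⟨part1, ?_, part3, ?_⟩
  · -- part (ii)
    intro h
    constructor
    · intro hh
      obtain ⟨g, hg⟩ := hinv h hh
      refine ⟨g, part3 h hh g hg, fun z => (hg z).symm⟩
    · rintro ⟨f, -, hf⟩
      rw [hf β]
      simp
  · -- part (iv)
    -- the closed subspace H_β
    set Hβ : Submodule ℂ H := LinearMap.ker ((LinearMap.proj β : (ℂ → X) →ₗ[ℂ] X).comp J)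
      with hHβ
    have hmem : ∀ h : H, h ∈ Hβ ↔ J h β = 0 := by
      intro h; simp [hHβ, LinearMap.mem_ker]
    have hclosed : IsClosed (Hβ : Set H) := by
      have : (Hβ : Set H) = (fun f : H => J f β) ⁻¹' {0} := by
        ext h; simp [hmem h]
      rw [this]
      exact IsClosed.preimage (hJeval β) isClosed_singleton
    haveI : CompleteSpace Hβ := hclosed.completeSpace_coe
    -- the operator R_β as a linear map
    have hspec : ∀ h : Hβ, ∃ g : H, ∀ z, (z - β) • J g z = J (h : H) z :=
      fun h => hinv h ((hmem h).mp h.2)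
    choose Rf hRf using hspec
    have Radd : ∀ a b : Hβ, Rf (a + b) = Rf a + Rf b := by
      intro a b
      refine uniq _ _ ((a : H) + (b : H)) ?_ ?_
      · intro z
        have := hRf (a + b) z
        simpa using this
      · intro z
        simp only [map_add, Pi.add_apply, smul_add, hRf a z, hRf b z]
    have Rsmul : ∀ (c : ℂ) (a : Hβ), Rf (c • a) = c • Rf a := by
      intro c a
      refine uniq _ _ (c • (a : H)) ?_ ?_
      · intro z
        have := hRf (c • a) z
        simpa using this
      · intro z
        simp only [map_smul, Pi.smul_apply]
        rw [smul_comm, hRf a z]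
    let R : Hβ →ₗ[ℂ] H := { toFun := Rf, map_add' := Radd, map_smul' := Rsmul }
    have hRgraph : IsClosed (R.graph : Set (Hβ × H)) := by
      have heq : (R.graph : Set (Hβ × H)) =
          ⋂ z : ℂ, {p : Hβ × H | (z - β) • J p.2 z = J (p.1 : H) z} := by
        ext p
        simp only [Set.mem_iInter, Set.mem_setOf_eq, SetLike.mem_coe,
          LinearMap.mem_graph_iff]
        constructor
        · intro hp z
          rw [hp]
          exact hRf p.1 z
        · intro hp
          show p.2 = Rf p.1
          exact uniq p.2 (Rf p.1) (p.1 : H) hp (hRf p.1)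
      rw [heq]
      refine isClosed_iInter fun z => isClosed_eq ?_ ?_
      · exact ((hJeval z).comp continuous_snd).const_smul _
      · exact (hJeval z).comp (continuous_subtype_val.comp continuous_fst)
    have hRcont : Continuous R := R.continuous_of_isClosed_graph hRgraph
    let Rc : Hβ →L[ℂ] H := ⟨R, hRcont⟩
    refine ⟨1 / (‖Rc‖ + 1), by positivity, ?_⟩
    intro f g hg
    set h : H := g - β • f with hh
    have hhβ : J h β = 0 := by
      simp [hh, map_sub, map_smul, hg β]
    have hHmem : h ∈ Hβ := (hmem h).mpr hhβ
    have hRh : Rf ⟨h, hHmem⟩ = f := by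
      refine uniq _ _ h (hRf ⟨h, hHmem⟩) ?_
      intro z
      rw [hh]
      simp only [map_sub, map_smul, Pi.sub_apply, Pi.smul_apply]
      rw [hg z, sub_smul]
    have hbound : ‖f‖ ≤ ‖Rc‖ * ‖h‖ := by
      have := Rc.le_opNorm ⟨h, hHmem⟩
      simpa [Rc, R, hRh] using this
    have h0 : (0:ℝ) ≤ ‖h‖ := norm_nonneg _
    have h1 : (0:ℝ) ≤ ‖Rc‖ := ContinuousLinearMap.opNorm_nonneg Rc
    rw [div_mul_eq_mul_div, div_le_iff₀ (by positivity)]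
    nlinarith [hbound]
end

section
/- Let H be a reproducing kernel Hilbert space of X-valued entire functions and z₁ ≠ z₂ complex numbers with R_{z₁} H_{z₁} ⊆ H and R_{z₂} H_{z₂} ⊆ H. Then the map (𝔗 - z₂ I) R_{z₁} : H_{z₁} → H_{z₂}, which sends f to the function z ↦ ((z - z₂)/(z - z₁)) f(z), is a linear bijection, with inverse (𝔗 - z₁ I) R_{z₂}. -/
/-- (𝔗 - z₂I)R_{z₁} : H_{z₁} → H_{z₂}, f ↦ (z ↦ ((z-z₂)/(z-z₁)) f(z)),
is a bijection (with inverse (𝔗 - z₁I)R_{z₂}).  The image g of f is characterized by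
(z - z₁) • g(z) = (z - z₂) • f(z) for all z. -/
theorem stmt12 {X H : Type*} [NormedAddCommGroup X] [InnerProductSpace ℂ X]
    [NormedAddCommGroup H] [InnerProductSpace ℂ H]
    (J : H →ₗ[ℂ] (ℂ → X)) (hJinj : Function.Injective J)
    (hJdiff : ∀ f : H, Differentiable ℂ (J f))
    (hJeval : ∀ z : ℂ, Continuous fun f : H => J f z)
    (z₁ z₂ : ℂ) (hne : z₁ ≠ z₂)
    (hinv1 : ∀ f : H, J f z₁ = 0 → ∃ g : H, ∀ z, (z - z₁) • J g z = J f z)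
    (hinv2 : ∀ f : H, J f z₂ = 0 → ∃ g : H, ∀ z, (z - z₂) • J g z = J f z) :
    (∀ f : H, J f z₁ = 0 →
      ∃! g : H, J g z₂ = 0 ∧ ∀ z, (z - z₁) • J g z = (z - z₂) • J f z) ∧
    (∀ g : H, J g z₂ = 0 →
      ∃ f : H, J f z₁ = 0 ∧ ∀ z, (z - z₁) • J g z = (z - z₂) • J f z) := by
  constructor
  · intro f hf
    obtain ⟨h, hh⟩ := hinv1 f hf
    refine ⟨f + (z₁ - z₂) • h, ⟨?_, ?_⟩, ?_⟩
    · -- J g z₂ = 0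
      have key : (z₂ - z₁) • J (f + (z₁ - z₂) • h) z₂ = 0 := by
        have := hh z₂
        simp only [map_add, map_smul, Pi.add_apply, Pi.smul_apply]
        rw [smul_add, smul_comm, this]
        module
      have hz : z₂ - z₁ ≠ 0 := sub_ne_zero.2 (Ne.symm hne)
      exact (smul_eq_zero.1 key).resolve_left hz
    · intro z
      have := hh z
      simp only [map_add, map_smul, Pi.add_apply, Pi.smul_apply]
      rw [smul_add, smul_comm (z - z₁) (z₁ - z₂), this]
      module
    · intro g' ⟨hg'2, hg'⟩
      -- uniqueness: J g' and J (f + (z₁-z₂)•h) agree off z₁, hence everywhere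
      set g : H := f + (z₁ - z₂) • h with hgdef
      have hg : ∀ z, (z - z₁) • J g z = (z - z₂) • J f z := by
        intro z
        have := hh z
        simp only [hgdef, map_add, map_smul, Pi.add_apply, Pi.smul_apply]
        rw [smul_add, smul_comm (z - z₁) (z₁ - z₂), this]
        module
      have heq : ∀ z ≠ z₁, J g' z = J g z := by
        intro z hz
        have : (z - z₁) • J g' z = (z - z₁) • J g z := by rw [hg z, hg' z]
        exact smul_right_injective X (sub_ne_zero.2 hz) this
      have hcont : Continuous (J (g' - g)) := (hJdiff (g' - g)).continuous
      have hzero : J (g' - g) = 0 := by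
        have hEq : Set.EqOn (J (g' - g)) 0 {z₁}ᶜ := by
          intro z hz
          simp only [map_sub, Pi.sub_apply, Pi.zero_apply]
          rw [heq z hz, sub_self]
        have hcl := hEq.closure hcont continuous_const
        funext z
        exact hcl (by rw [(dense_compl_singleton z₁).closure_eq]; trivial)
      have : g' - g = 0 := hJinj (by simpa using hzero)
      exact sub_eq_zero.1 this
  · intro g hg
    obtain ⟨h, hh⟩ := hinv2 g hg
    refine ⟨g + (z₂ - z₁) • h, ?_, ?_⟩
    · have key : (z₁ - z₂) • J (g + (z₂ - z₁) • h) z₁ = 0 := by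
        have := hh z₁
        simp only [map_add, map_smul, Pi.add_apply, Pi.smul_apply]
        rw [smul_add, smul_comm, this]
        module
      have hz : z₁ - z₂ ≠ 0 := sub_ne_zero.2 hne
      exact (smul_eq_zero.1 key).resolve_left hz
    · intro z
      have := hh z
      simp only [map_add, map_smul, Pi.add_apply, Pi.smul_apply]
      rw [smul_add, smul_comm (z - z₂) (z₂ - z₁), this]
      module
end

section
/- Let T be a densely defined symmetric operator on a complex separable Hilbert space X with compact bounded inverse, eigenvalues z_n (each of finite multiplicity k_n with orthonormal eigenvectors u_n^i), and resolvent R_z = (zI - T)^{-1} for z ∉ {z_n}. Let Q be a scalar entire function with only simple zeros exactly at {z_n}, and set F(z) = Q(z)R_z. Then F extends to an entire B(X)-valued function, and for every n, F(z_n) = Q'(z_n) · P_n, where P_n u = Σ_{i=1}^{k_n} ⟨u, u_n^i⟩ u_n^i is the orthogonal projection onto the eigenspace of z_n; in particular F(z)u_n^i = (Q(z)/(z - z_n)) u_n^i for all z and all n, i. -/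
open scoped ComplexInnerProductSpace ENNReal NNReal lp
open Filter

noncomputable section Stmt16Aux

namespace Stmt16Aux

variable {ι : Type*}

lemma memℓp_infty_of_le {f : ι → ℂ} {M : ℝ} (h : ∀ i, ‖f i‖ ≤ M) : Memℓp f ∞ :=
  memℓp_infty ⟨M, by rintro x ⟨i, rfl⟩; exact h i⟩

lemma bound_of_finite_exceptions {v : ℕ → ℝ} {K : ℝ} (hK : 0 ≤ K) (hv : ∀ n, 0 ≤ v n)
    (T : Finset ℕ) (hout : ∀ n ∉ T, v n ≤ K) (n : ℕ) : v n ≤ K + ∑ m ∈ T, v m := by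
  by_cases hn : n ∈ T
  · have : v n ≤ ∑ m ∈ T, v m := Finset.single_le_sum (fun m _ => hv m) hn
    linarith
  · have : (0:ℝ) ≤ ∑ m ∈ T, v m := Finset.sum_nonneg fun m _ => hv m
    linarith [hout n hn]

/-- The element of `ℓ²` obtained by pointwise multiplication by a bounded sequence. -/
def mulElt (c : lp (fun _ : ι => ℂ) ∞) (f : lp (fun _ : ι => ℂ) 2) : lp (fun _ : ι => ℂ) 2 := by
  refine ⟨fun i => c i * f i, memℓp_gen ?_⟩
  have hf : Summable fun i => ‖f i‖ ^ (2 : ℝ≥0∞).toReal :=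
    (memℓp_gen_iff (by norm_num)).1 (lp.memℓp f)
  refine Summable.of_nonneg_of_le (fun i => by positivity) (fun i => ?_) (hf.mul_left (‖c‖ ^ (2 : ℝ≥0∞).toReal))
  have h1 : ‖c i * f i‖ ≤ ‖c‖ * ‖f i‖ := by
    rw [norm_mul]
    exact mul_le_mul_of_nonneg_right (lp.norm_apply_le_norm ENNReal.top_ne_zero c i)
      (norm_nonneg _)
  have h2 : (2 : ℝ≥0∞).toReal = 2 := by norm_num
  rw [h2] at *
  calc ‖c i * f i‖ ^ (2:ℝ) ≤ (‖c‖ * ‖f i‖) ^ (2:ℝ) := by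
        apply Real.rpow_le_rpow (norm_nonneg _) h1 (by norm_num)
    _ = ‖c‖ ^ (2:ℝ) * ‖f i‖ ^ (2:ℝ) := Real.mul_rpow (norm_nonneg _) (norm_nonneg _)

@[simp] lemma mulElt_apply (c : lp (fun _ : ι => ℂ) ∞) (f : lp (fun _ : ι => ℂ) 2) (i : ι) :
    mulElt c f i = c i * f i := rfl

lemma norm_mulElt_le (c : lp (fun _ : ι => ℂ) ∞) (f : lp (fun _ : ι => ℂ) 2) :
    ‖mulElt c f‖ ≤ ‖c‖ * ‖f‖ := by
  have hp : (0:ℝ) < (2 : ℝ≥0∞).toReal := by norm_num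
  have hf : Summable fun i => ‖f i‖ ^ (2 : ℝ≥0∞).toReal :=
    (memℓp_gen_iff hp).1 (lp.memℓp f)
  have hterm : ∀ i, ‖mulElt c f i‖ ^ (2 : ℝ≥0∞).toReal ≤
      ‖c‖ ^ (2 : ℝ≥0∞).toReal * ‖f i‖ ^ (2 : ℝ≥0∞).toReal := by
    intro i
    rw [← Real.mul_rpow (norm_nonneg _) (norm_nonneg _)]
    refine Real.rpow_le_rpow (norm_nonneg _) ?_ hp.le
    rw [mulElt_apply, norm_mul]
    exact mul_le_mul_of_nonneg_right (lp.norm_apply_le_norm ENNReal.top_ne_zero c i)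
      (norm_nonneg _)
  have key : ‖mulElt c f‖ ^ (2 : ℝ≥0∞).toReal ≤ (‖c‖ * ‖f‖) ^ (2 : ℝ≥0∞).toReal := by
    rw [lp.norm_rpow_eq_tsum hp, Real.mul_rpow (norm_nonneg _) (norm_nonneg _),
      lp.norm_rpow_eq_tsum hp f, ← tsum_mul_left]
    exact Summable.tsum_le_tsum hterm ((memℓp_gen_iff hp).1 (lp.memℓp _)) (hf.mul_left _)
  have h2 : 0 ≤ ‖c‖ * ‖f‖ := by positivity
  have key' : ‖mulElt c f‖ ^ (2:ℕ) ≤ (‖c‖ * ‖f‖) ^ (2:ℕ) := by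
    have ht : (2 : ℝ≥0∞).toReal = ((2:ℕ) : ℝ) := by norm_num
    rw [ht, Real.rpow_natCast, Real.rpow_natCast] at key
    exact key
  exact le_of_pow_le_pow_left₀ two_ne_zero h2 key'


lemma mulElt_add (c : lp (fun _ : ι => ℂ) ∞) (f g : lp (fun _ : ι => ℂ) 2) :
    mulElt c (f + g) = mulElt c f + mulElt c g := by
  apply lp.ext; funext i
  simp [mulElt_apply, lp.coeFn_add, Pi.add_apply, mul_add]

lemma mulElt_smul (c : lp (fun _ : ι => ℂ) ∞) (a : ℂ) (f : lp (fun _ : ι => ℂ) 2) :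
    mulElt c (a • f) = a • mulElt c f := by
  apply lp.ext; funext i
  simp only [mulElt_apply, lp.coeFn_smul, Pi.smul_apply, smul_eq_mul]
  ring

/-- Pointwise multiplication as a continuous linear operator on `ℓ²`. -/
def mulOp (c : lp (fun _ : ι => ℂ) ∞) : lp (fun _ : ι => ℂ) 2 →L[ℂ] lp (fun _ : ι => ℂ) 2 :=
  LinearMap.mkContinuous
    { toFun := fun f => mulElt c f
      map_add' := fun f g => mulElt_add c f g
      map_smul' := fun a f => mulElt_smul c a f }
    ‖c‖ (fun f => norm_mulElt_le c f)

lemma mulOp_apply (c : lp (fun _ : ι => ℂ) ∞) (f : lp (fun _ : ι => ℂ) 2) :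
    mulOp c f = mulElt c f := rfl

variable {X : Type*} [NormedAddCommGroup X] [InnerProductSpace ℂ X] [CompleteSpace X]

def reprCLM (e : HilbertBasis ι ℂ X) : X →L[ℂ] ℓ²(ι, ℂ) :=
  ↑e.repr.toContinuousLinearEquiv

def reprSymmCLM (e : HilbertBasis ι ℂ X) : ℓ²(ι, ℂ) →L[ℂ] X :=
  ↑e.repr.symm.toContinuousLinearEquiv

@[simp] lemma reprCLM_apply (e : HilbertBasis ι ℂ X) (u : X) : reprCLM e u = e.repr u := rfl
@[simp] lemma reprSymmCLM_apply (e : HilbertBasis ι ℂ X) (f : ℓ²(ι, ℂ)) :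
    reprSymmCLM e f = e.repr.symm f := rfl

/-- The diagonal operator with coefficients `c` with respect to the Hilbert basis `e`. -/
def diag (e : HilbertBasis ι ℂ X) (c : lp (fun _ : ι => ℂ) ∞) : X →L[ℂ] X :=
  (reprSymmCLM e).comp ((mulOp c).comp (reprCLM e))

lemma diag_apply (e : HilbertBasis ι ℂ X) (c : lp (fun _ : ι => ℂ) ∞) (u : X) :
    diag e c u = e.repr.symm (mulElt c (e.repr u)) := rfl

lemma repr_diag (e : HilbertBasis ι ℂ X) (c : lp (fun _ : ι => ℂ) ∞) (u : X) :
    e.repr (diag e c u) = mulElt c (e.repr u) := by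
  rw [diag_apply, LinearIsometryEquiv.apply_symm_apply]

lemma norm_diag_le (e : HilbertBasis ι ℂ X) (c : lp (fun _ : ι => ℂ) ∞) :
    ‖diag e c‖ ≤ ‖c‖ := by
  refine ContinuousLinearMap.opNorm_le_bound _ (norm_nonneg _) fun u => ?_
  rw [diag_apply, LinearIsometryEquiv.norm_map]
  calc ‖mulElt c (e.repr u)‖ ≤ ‖c‖ * ‖e.repr u‖ := norm_mulElt_le _ _
    _ = ‖c‖ * ‖u‖ := by rw [LinearIsometryEquiv.norm_map]

lemma diag_add (e : HilbertBasis ι ℂ X) (c c' : lp (fun _ : ι => ℂ) ∞) :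
    diag e (c + c') = diag e c + diag e c' := by
  refine ContinuousLinearMap.ext fun u => ?_
  apply e.repr.injective
  simp only [ContinuousLinearMap.add_apply]
  rw [map_add, repr_diag, repr_diag, repr_diag]
  apply lp.ext; funext i
  simp [mulElt_apply, lp.coeFn_add, Pi.add_apply, add_mul]

lemma diag_smul (e : HilbertBasis ι ℂ X) (a : ℂ) (c : lp (fun _ : ι => ℂ) ∞) :
    diag e (a • c) = a • diag e c := by
  refine ContinuousLinearMap.ext fun u => ?_
  apply e.repr.injective
  rw [ContinuousLinearMap.smul_apply, map_smul, repr_diag, repr_diag]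
  apply lp.ext; funext i
  simp only [mulElt_apply, lp.coeFn_smul, Pi.smul_apply, smul_eq_mul]
  ring

/-- The diagonal operator, as a continuous linear map in the coefficient sequence. -/
def diagL (e : HilbertBasis ι ℂ X) : lp (fun _ : ι => ℂ) ∞ →L[ℂ] (X →L[ℂ] X) :=
  LinearMap.mkContinuous
    { toFun := diag e
      map_add' := diag_add e
      map_smul' := diag_smul e }
    1 (fun c => by rw [one_mul]; exact norm_diag_le e c)

lemma diagL_apply (e : HilbertBasis ι ℂ X) (c : lp (fun _ : ι => ℂ) ∞) :
    diagL e c = diag e c := rfl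

lemma diag_apply_basis (e : HilbertBasis ι ℂ X) (c : lp (fun _ : ι => ℂ) ∞) (i : ι) :
    diag e c (e i) = c i • (e i : X) := by
  classical
  apply e.repr.injective
  rw [repr_diag, map_smul, e.repr_self]
  apply lp.ext; funext j
  simp only [mulElt_apply, e.repr_self, lp.coeFn_smul, Pi.smul_apply, smul_eq_mul]
  by_cases h : j = i
  · subst h; simp [lp.single_apply_self]
  · simp [lp.single_apply_ne 2 i _ h, Pi.single_eq_of_ne h]

lemma hasSum_diag (e : HilbertBasis ι ℂ X) (c : lp (fun _ : ι => ℂ) ∞) (u : X) :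
    HasSum (fun i => (c i * ⟪(e i : X), u⟫) • (e i : X)) (diag e c u) := by
  have h := e.hasSum_repr (diag e c u)
  have heq : (fun i => (c i * ⟪(e i : X), u⟫) • (e i : X)) =
      fun i => e.repr (diag e c u) i • (e i : X) := by
    funext i
    rw [repr_diag, mulElt_apply, e.repr_apply_apply]
  rw [heq]
  exact h


end Stmt16Aux

open Stmt16Aux

set_option maxHeartbeats 1000000 in
/-- F(w) = Q(w)R_w extends to an entire B(X)-valued function with
F(z_n) = Q'(z_n)·P_n (P_n the orthogonal projection onto the n-th eigenspace), and
F(w)u_n^i = (Q(w)/(w - z_n)) u_n^i for w ≠ z_n. -/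
theorem stmt16 {X ι : Type*} [NormedAddCommGroup X] [InnerProductSpace ℂ X] [CompleteSpace X]
    (e : HilbertBasis ι ℂ X) (ν : ι → ℕ) (z : ℕ → ℂ)
    (hzinj : Function.Injective z)
    (hz : Filter.Tendsto (fun n => ‖z n‖) Filter.atTop Filter.atTop)
    (hfin : ∀ n, Set.Finite {i : ι | ν i = n})
    (Q : ℂ → ℂ) (hQ : Differentiable ℂ Q)
    (hQzero : ∀ w, Q w = 0 ↔ ∃ n, w = z n)
    (hQsimple : ∀ n, deriv Q (z n) ≠ 0) :
    ∃ F : ℂ → X →L[ℂ] X, Differentiable ℂ F ∧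
      (∀ (w : ℂ) (i : ι), w ≠ z (ν i) → F w (e i) = (Q w / (w - z (ν i))) • (e i : X)) ∧
      (∀ i : ι, F (z (ν i)) (e i) = deriv Q (z (ν i)) • (e i : X)) ∧
      (∀ (n : ℕ) (u : X),
        HasSum (fun i => (if ν i = n then deriv Q (z n) * ⟪(e i : X), u⟫ else 0) • (e i : X))
          (F (z n) u)) := by
  classical
  have Qz : ∀ n, Q (z n) = 0 := fun n => (hQzero (z n)).2 ⟨n, rfl⟩
  set g : ℕ → ℂ → ℂ := fun n w => dslope Q (z n) w with hgdef
  have hgdiff : ∀ n, Differentiable ℂ (g n) := by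
    intro n
    rw [← differentiableOn_univ]
    exact (Complex.differentiableOn_dslope (c := z n) Filter.univ_mem).2 hQ.differentiableOn
  have hzfin : ∀ R : ℝ, {n : ℕ | ‖z n‖ < R}.Finite := by
    intro R
    have h := hz.eventually_ge_atTop R
    rw [← Nat.cofinite_eq_atTop] at h
    have h2 := Filter.eventually_cofinite.mp h
    convert h2 using 1
    ext n; simp [not_le]
  have hgval : ∀ n w, w ≠ z n → g n w = Q w / (w - z n) := by
    intro n w hw
    simp only [hgdef]
    rw [dslope_of_ne _ hw, slope_def_field, Qz, sub_zero]
  have hgbound : ∀ n w, ‖w‖ + 1 ≤ ‖z n‖ → ‖g n w‖ ≤ ‖Q w‖ := by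
    intro n w h
    have hne : w ≠ z n := by
      intro hEq; rw [hEq] at h; linarith
    have h1 : (1:ℝ) ≤ ‖w - z n‖ := by
      have h2 := norm_sub_norm_le (z n) w
      rw [norm_sub_rev (z n) w] at h2
      linarith
    rw [hgval n w hne, norm_div]
    exact div_le_self (norm_nonneg _) h1
  have memC : ∀ w : ℂ, Memℓp (fun i => g (ν i) w) ∞ := by
    intro w
    refine memℓp_infty_of_le (M := ‖Q w‖ + ∑ m ∈ (hzfin (‖w‖ + 1)).toFinset, ‖g m w‖) fun i => ?_
    refine bound_of_finite_exceptions (v := fun n => ‖g n w‖) (K := ‖Q w‖) (norm_nonneg _) (fun n => norm_nonneg _) _ (fun n hn => ?_)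
      (ν i)
    rw [Set.Finite.mem_toFinset, Set.mem_setOf_eq, not_lt] at hn
    exact hgbound n w hn
  set C : ℂ → lp (fun _ : ι => ℂ) ∞ := fun w => ⟨fun i => g (ν i) w, memC w⟩ with hCdef
  have hCapp : ∀ w i, C w i = g (ν i) w := fun w i => rfl
  refine ⟨fun w => diag e (C w), ?_, ?_, ?_, ?_⟩
  · -- Differentiability
    intro w₀
    suffices hC : DifferentiableAt ℂ C w₀ by
      have := ((diagL e).differentiableAt).comp w₀ hC
      simpa [Function.comp_def, diagL_apply] using this
    set T : Finset ℕ := (hzfin (‖w₀‖ + 3)).toFinset with hTdef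
    have hT_out : ∀ n, n ∉ T → ‖w₀‖ + 3 ≤ ‖z n‖ := by
      intro n hn
      rw [hTdef, Set.Finite.mem_toFinset, Set.mem_setOf_eq, not_lt] at hn
      exact hn
    have hball : ∀ w ∈ Metric.ball w₀ (1:ℝ), ∀ n, n ∉ T → 2 ≤ ‖w - z n‖ := by
      intro w hw n hn
      have h1 : ‖w - w₀‖ < 1 := by rwa [Metric.mem_ball, dist_eq_norm] at hw
      have h2 : ‖w‖ ≤ ‖w₀‖ + 1 := by
        have := norm_sub_norm_le w w₀
        linarith
      have h3 := norm_sub_norm_le (z n) w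
      rw [norm_sub_rev (z n) w] at h3
      have h4 := hT_out n hn
      linarith
    have hball_ne : ∀ w ∈ Metric.ball w₀ (1:ℝ), ∀ n, n ∉ T → w ≠ z n := by
      intro w hw n hn hEq
      have := hball w hw n hn
      rw [hEq, sub_self, norm_zero] at this
      linarith
    have hw₀ball : w₀ ∈ Metric.ball w₀ (1:ℝ) := Metric.mem_ball_self one_pos
    -- the indicator sequences
    have memInd : ∀ n : ℕ, Memℓp (fun i => if ν i = n then (1:ℂ) else 0) ∞ := by
      intro n
      refine memℓp_infty_of_le (M := 1) fun i => ?_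
      split <;> simp
    set ind : ℕ → lp (fun _ : ι => ℂ) ∞ := fun n => ⟨fun i => if ν i = n then 1 else 0, memInd n⟩
      with hinddef
    set A : ℂ → lp (fun _ : ι => ℂ) ∞ := fun w => ∑ n ∈ T, g n w • ind n with hAdef
    have hA : DifferentiableAt ℂ A w₀ := by
      refine DifferentiableAt.fun_sum fun n _ => ?_
      exact ((hgdiff n).differentiableAt).smul_const (ind n)
    -- the tail sequences
    have memB : ∀ w : ℂ, Memℓp (fun i => if ν i ∈ T then (0:ℂ) else (w - z (ν i))⁻¹) ∞ := by
      intro w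
      set T' : Finset ℕ := (hzfin (‖w‖ + 1)).toFinset with hT'def
      refine memℓp_infty_of_le
        (M := 1 + ∑ m ∈ T', ‖if m ∈ T then (0:ℂ) else (w - z m)⁻¹‖) fun i => ?_
      refine bound_of_finite_exceptions
        (v := fun n => ‖if n ∈ T then (0:ℂ) else (w - z n)⁻¹‖) (K := 1) zero_le_one
        (fun n => norm_nonneg _) T' (fun n hn => ?_) (ν i)
      rw [hT'def, Set.Finite.mem_toFinset, Set.mem_setOf_eq, not_lt] at hn
      show ‖if n ∈ T then (0:ℂ) else (w - z n)⁻¹‖ ≤ 1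
      by_cases hnT : n ∈ T
      · simp [hnT]
      · rw [if_neg hnT, norm_inv]
        have h1 : (1:ℝ) ≤ ‖w - z n‖ := by
          have h2 := norm_sub_norm_le (z n) w
          rw [norm_sub_rev (z n) w] at h2
          linarith
        exact inv_le_one_of_one_le₀ h1
    set B : ℂ → lp (fun _ : ι => ℂ) ∞ := fun w =>
      ⟨fun i => if ν i ∈ T then (0:ℂ) else (w - z (ν i))⁻¹, memB w⟩ with hBdef
    have memB' : Memℓp (fun i => if ν i ∈ T then (0:ℂ)
        else -((w₀ - z (ν i))⁻¹ * (w₀ - z (ν i))⁻¹)) ∞ := by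
      refine memℓp_infty_of_le (M := 1) fun i => ?_
      show ‖if ν i ∈ T then (0:ℂ) else -((w₀ - z (ν i))⁻¹ * (w₀ - z (ν i))⁻¹)‖ ≤ 1
      by_cases hi : ν i ∈ T
      · simp [hi]
      · rw [if_neg hi, norm_neg, norm_mul, norm_inv]
        have h1 := hball w₀ hw₀ball (ν i) hi
        have h2 : ‖w₀ - z (ν i)‖⁻¹ ≤ 1 := inv_le_one_of_one_le₀ (by linarith)
        have h3 : (0:ℝ) ≤ ‖w₀ - z (ν i)‖⁻¹ := by positivity
        nlinarith
    set B' : lp (fun _ : ι => ℂ) ∞ := ⟨_, memB'⟩ with hB'def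
    have hB : HasDerivAt B B' w₀ := by
      rw [hasDerivAt_iff_isLittleO]
      have big : (fun w => B w - B w₀ - (w - w₀) • B') =O[nhds w₀]
          (fun w => (w - w₀) * (w - w₀)) := by
        refine Asymptotics.IsBigO.of_bound 1 ?_
        filter_upwards [Metric.ball_mem_nhds w₀ one_pos] with w hw
        rw [one_mul]
        refine lp.norm_le_of_forall_le (norm_nonneg _) fun i => ?_
        have hcoe : (B w - B w₀ - (w - w₀) • B') i
            = B w i - B w₀ i - (w - w₀) * B' i := by
          rw [lp.coeFn_sub, Pi.sub_apply, lp.coeFn_sub, Pi.sub_apply, lp.coeFn_smul,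
            Pi.smul_apply, smul_eq_mul]
        rw [hcoe]
        by_cases hi : ν i ∈ T
        · have hBw : ∀ v : ℂ, B v i = 0 := fun v => by
            show (if ν i ∈ T then (0:ℂ) else (v - z (ν i))⁻¹) = 0
            rw [if_pos hi]
          have hB'i : B' i = 0 := by
            show (if ν i ∈ T then (0:ℂ) else _) = 0
            rw [if_pos hi]
          rw [hBw, hBw, hB'i, mul_zero, sub_zero, sub_zero, norm_zero]
          positivity
        · have hBw : ∀ v : ℂ, B v i = (v - z (ν i))⁻¹ := fun v => by
            show (if ν i ∈ T then (0:ℂ) else (v - z (ν i))⁻¹) = _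
            rw [if_neg hi]
          have hB'i : B' i = -((w₀ - z (ν i))⁻¹ * (w₀ - z (ν i))⁻¹) := by
            show (if ν i ∈ T then (0:ℂ) else _) = _
            rw [if_neg hi]
          rw [hBw, hBw, hB'i]
          have h1 : w - z (ν i) ≠ 0 := sub_ne_zero.2 (hball_ne w hw (ν i) hi)
          have h2 : w₀ - z (ν i) ≠ 0 := sub_ne_zero.2 (hball_ne w₀ hw₀ball (ν i) hi)
          have hident : (w - z (ν i))⁻¹ - (w₀ - z (ν i))⁻¹
              - (w - w₀) * -((w₀ - z (ν i))⁻¹ * (w₀ - z (ν i))⁻¹)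
              = ((w - w₀) * (w - w₀)) *
                ((w - z (ν i))⁻¹ * ((w₀ - z (ν i))⁻¹ * (w₀ - z (ν i))⁻¹)) := by
            field_simp
            ring
          rw [hident, norm_mul]
          have hn1 : ‖(w - z (ν i))⁻¹‖ ≤ 1 := by
            rw [norm_inv]
            exact inv_le_one_of_one_le₀ (by linarith [hball w hw (ν i) hi])
          have hn2 : ‖(w₀ - z (ν i))⁻¹‖ ≤ 1 := by
            rw [norm_inv]
            exact inv_le_one_of_one_le₀ (by linarith [hball w₀ hw₀ball (ν i) hi])
          have hn3 : ‖(w - z (ν i))⁻¹ * ((w₀ - z (ν i))⁻¹ * (w₀ - z (ν i))⁻¹)‖ ≤ 1 := by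
            rw [norm_mul, norm_mul]
            have p1 : (0:ℝ) ≤ ‖(w - z (ν i))⁻¹‖ := norm_nonneg _
            have p2 : (0:ℝ) ≤ ‖(w₀ - z (ν i))⁻¹‖ := norm_nonneg _
            nlinarith
          calc ‖(w - w₀) * (w - w₀)‖ *
                ‖(w - z (ν i))⁻¹ * ((w₀ - z (ν i))⁻¹ * (w₀ - z (ν i))⁻¹)‖
              ≤ ‖(w - w₀) * (w - w₀)‖ * 1 :=
                mul_le_mul_of_nonneg_left hn3 (norm_nonneg _)
            _ = ‖(w - w₀) * (w - w₀)‖ := mul_one _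
      have small : (fun w : ℂ => (w - w₀) * (w - w₀)) =o[nhds w₀] (fun w => w - w₀) := by
        have h1 : (fun w : ℂ => w - w₀) =o[nhds w₀] (fun _ : ℂ => (1:ℂ)) := by
          rw [Asymptotics.isLittleO_one_iff]
          have : Filter.Tendsto (fun w : ℂ => w - w₀) (nhds w₀) (nhds (w₀ - w₀)) :=
            (continuous_id.sub continuous_const).tendsto w₀
          simpa using this
        have h2 := h1.mul_isBigO (Asymptotics.isBigO_refl (fun w : ℂ => w - w₀) (nhds w₀))
        simpa using h2
      exact big.trans_isLittleO small
    have hRHS : DifferentiableAt ℂ (fun w => A w + Q w • B w) w₀ :=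
      hA.add ((hQ w₀).smul hB.differentiableAt)
    have hEq : (fun w => A w + Q w • B w) =ᶠ[nhds w₀] C := by
      filter_upwards [Metric.ball_mem_nhds w₀ one_pos] with w hw
      apply lp.ext; funext i
      have hcoe : (A w + Q w • B w) i = A w i + Q w * B w i := by
        rw [lp.coeFn_add, Pi.add_apply, lp.coeFn_smul, Pi.smul_apply, smul_eq_mul]
      rw [hcoe]
      have hAi : A w i = if ν i ∈ T then g (ν i) w else 0 := by
        rw [hAdef]
        have : (∑ n ∈ T, g n w • ind n) i = ∑ n ∈ T, (g n w • ind n) i := by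
          rw [lp.coeFn_sum, Finset.sum_apply]
        rw [this]
        have : ∀ n ∈ T, (g n w • ind n) i = if ν i = n then g n w else 0 := by
          intro n _
          rw [lp.coeFn_smul, Pi.smul_apply, smul_eq_mul]
          show g n w * (if ν i = n then (1:ℂ) else 0) = _
          split <;> simp
        rw [Finset.sum_congr rfl this, Finset.sum_ite_eq T (ν i) fun n => g n w]
      by_cases hi : ν i ∈ T
      · have hBi : B w i = 0 := by
          show (if ν i ∈ T then (0:ℂ) else _) = 0
          rw [if_pos hi]
        rw [hAi, if_pos hi, hBi, mul_zero, add_zero]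
      · have hBi : B w i = (w - z (ν i))⁻¹ := by
          show (if ν i ∈ T then (0:ℂ) else _) = _
          rw [if_neg hi]
        rw [hAi, if_neg hi, hBi, zero_add]
        show Q w * (w - z (ν i))⁻¹ = C w i
        rw [hCapp, hgval _ _ (hball_ne w hw (ν i) hi), div_eq_mul_inv]
    exact hRHS.congr_of_eventuallyEq hEq.symm
  · intro w i hw
    rw [diag_apply_basis, hCapp, hgval _ _ hw]
  · intro i
    rw [diag_apply_basis, hCapp]
    simp only [hgdef]
    rw [dslope_same]
  · intro n u
    have h := hasSum_diag e (C (z n)) u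
    have heq : ∀ i, (if ν i = n then deriv Q (z n) * ⟪(e i : X), u⟫ else 0) • (e i : X) =
        (C (z n) i * ⟪(e i : X), u⟫) • (e i : X) := by
      intro i
      rw [hCapp]
      by_cases hi : ν i = n
      · subst hi
        simp only [hgdef, dslope_same, if_true]
      · rw [if_neg hi]
        have hne : z n ≠ z (ν i) := fun hEq => hi (hzinj hEq.symm)
        rw [hgval _ _ hne, Qz, zero_div, zero_mul, zero_smul]
    have : (fun i => (if ν i = n then deriv Q (z n) * ⟪(e i : X), u⟫ else 0) • (e i : X)) =
        fun i => (C (z n) i * ⟪(e i : X), u⟫) • (e i : X) := funext heq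
    rw [this]
    exact h
end Stmt16Aux
end

section
/- In the setting F(z) = Q(z)R_z of the previous statement, every f ∈ H_F (the Hilbert space {F(·)u : u ∈ X} with ⟨F(·)u, F(·)v⟩ = ⟨u,v⟩_X) is reconstructed by the Lagrange-type interpolation series f(z) = Σ_{n=1}^∞ (Q(z)/((z - z_n) Q'(z_n))) f(z_n) for all z ∈ ℂ, with convergence in H_F (hence pointwise). -/
open scoped ComplexInnerProductSpace

/-- in the setting F(w) = Q(w)R_w, every f = F(·)u ∈ H_F is completely
determined by the values f(z_n) and is reconstructed by the Lagrange-type interpolation series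
f(w) = Σ_n (Q(w)/((w - z_n) Q'(z_n))) f(z_n). -/
theorem stmt17 {X ι : Type*} [NormedAddCommGroup X] [InnerProductSpace ℂ X] [CompleteSpace X]
    (e : HilbertBasis ι ℂ X) (ν : ι → ℕ) (z : ℕ → ℂ)
    (hzinj : Function.Injective z)
    (hz : Filter.Tendsto (fun n => ‖z n‖) Filter.atTop Filter.atTop)
    (hfin : ∀ n, Set.Finite {i : ι | ν i = n})
    (Q : ℂ → ℂ) (hQ : Differentiable ℂ Q)
    (hQzero : ∀ w, Q w = 0 ↔ ∃ n, w = z n)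
    (hQsimple : ∀ n, deriv Q (z n) ≠ 0)
    (F : ℂ → X →L[ℂ] X) (hFdiff : Differentiable ℂ F)
    (hFe : ∀ (w : ℂ) (i : ι),
      F w (e i) = (if w = z (ν i) then deriv Q (z (ν i)) else Q w / (w - z (ν i))) • (e i : X)) :
    -- f ∈ H_F is completely determined by the values {f(z_n)}
    (∀ u v : X, (∀ n, F (z n) u = F (z n) v) → u = v) ∧
    -- Lagrange-type interpolation series
    (∀ (u : X) (w : ℂ), (∀ n, w ≠ z n) →
      HasSum (fun n => (Q w / ((w - z n) * deriv Q (z n))) • F (z n) u) (F w u)) := by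
  classical
  set c : ℂ → ι → ℂ :=
    fun w i => if w = z (ν i) then deriv Q (z (ν i)) else Q w / (w - z (ν i)) with hc
  -- key : inner products with basis vectors
  have key : ∀ (w : ℂ) (u : X) (i : ι), ⟪e i, F w u⟫ = c w i * ⟪e i, u⟫ := by
    intro w u i
    have h1 : HasSum (fun j => ⟪e j, u⟫ • F w (e j)) (F w u) := by
      have := (e.hasSum_repr u).mapL (F w)
      simpa [e.repr_apply_apply] using this
    have h2 : HasSum (fun j => ⟪e i, ⟪e j, u⟫ • F w (e j)⟫) ⟪e i, F w u⟫ :=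
      h1.mapL (innerSL ℂ (e i))
    have h3 : (fun j => ⟪e i, ⟪e j, u⟫ • F w (e j)⟫)
        = fun j => if j = i then c w i * ⟪e i, u⟫ else 0 := by
      funext j
      have horth := orthonormal_iff_ite.mp e.orthonormal i j
      rw [hFe, inner_smul_right, inner_smul_right, horth]
      by_cases hij : j = i
      · subst hij
        simp only [if_pos rfl, mul_one, hc]
        split_ifs <;> ring
      · simp only [if_neg hij, if_neg (fun h : i = j => hij h.symm), mul_zero]
    rw [h3] at h2
    exact h2.unique (hasSum_ite_eq i _)
  have hQz : ∀ n, Q (z n) = 0 := fun n => (hQzero (z n)).mpr ⟨n, rfl⟩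
  -- value of c at the nodes
  have hczn : ∀ (n : ℕ) (i : ι),
      (if z n = z (ν i) then deriv Q (z (ν i)) else Q (z n) / (z n - z (ν i)))
        = if ν i = n then deriv Q (z n) else 0 := by
    intro n i
    by_cases h : ν i = n
    · simp [h]
    · have hne : z n ≠ z (ν i) := fun hh => h (hzinj hh.symm)
      rw [if_neg hne, if_neg h, hQz n, zero_div]
  constructor
  · intro u v huv
    apply e.repr.injective
    ext i
    rw [e.repr_apply_apply, e.repr_apply_apply]
    have h1 := key (z (ν i)) u i
    have h2 := key (z (ν i)) v i
    rw [huv (ν i)] at h1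
    have hci : c (z (ν i)) i = deriv Q (z (ν i)) := by simp [hc]
    rw [h2, hci] at h1
    exact mul_left_cancel₀ (hQsimple (ν i)) h1.symm
  · intro u w hw
    set a : ℕ → ℂ := fun n => Q w / ((w - z n) * deriv Q (z n)) with ha
    set g : ι → X := fun i => (Q w / (w - z (ν i)) * ⟪e i, u⟫) • e i with hg
    -- the full series for F w u
    have hFwu : HasSum g (F w u) := by
      have := e.hasSum_repr (F w u)
      have heq : (fun i => e.repr (F w u) i • e i) = g := by
        funext i
        rw [e.repr_apply_apply, key, hc]
        simp [hg, hw (ν i)]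
      rwa [heq] at this
    have hfib := hFwu.tsum_fiberwise ν
    -- identify each fiber sum
    have hfibereq : ∀ n, ∑' (i : ν ⁻¹' {n}), g i = a n • F (z n) u := by
      intro n
      have h0 := (e.hasSum_repr u).mapL (a n • F (z n))
      have heq : (fun i => (a n • F (z n)) (e.repr u i • e i))
          = Set.indicator (ν ⁻¹' {n}) g := by
        funext i
        rw [ContinuousLinearMap.smul_apply, map_smul, e.repr_apply_apply, hFe, hczn]
        by_cases h : ν i = n
        · have hmem : i ∈ ν ⁻¹' ({n} : Set ℕ) := h
          rw [Set.indicator_of_mem hmem, if_pos h, hg]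
          simp only [smul_smul]
          congr 1
          rw [h, ha]
          have h1 : w - z n ≠ 0 := sub_ne_zero.mpr (hw n)
          field_simp [hQsimple n, h1]
        · have hmem : i ∉ ν ⁻¹' ({n} : Set ℕ) := h
          rw [Set.indicator_of_notMem hmem, if_neg h]
          simp
      rw [heq] at h0
      exact (hasSum_subtype_iff_indicator.mpr h0).tsum_eq
    have : (fun n => ∑' (i : ν ⁻¹' {n}), g i)
        = fun n => a n • F (z n) u := funext hfibereq
    rwa [this] at hfib
end
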